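/- arXiv:1902.08475 — 4 statements merged into one kernel-verified Lean document; each statement's English description precedes it below -/
import Mathlib

section
/- The function f(p_c) = (τ - Nτ_c)·(A·p_d·[M - βσ²(N-1)/(βNp_cτ_c + σ²(K+1))] + B) - Nτ_c·p_c is strictly concave in p_c on (0,∞): its second derivative equals -2A·p_d(τ-Nτ_c)σ²N²(N-1)τ_c²β³/(βNp_cτ_c + σ²(K+1))³ < 0. -/
/-!
Up to an additive constant, `f(p) = -a / (b p + d) - e p` with `a = (τ - Nτ_c) A p_d β σ² (N - 1) > 0`,
`b = βNτ_c`, `d = σ²(K + 1)` and `e = Nτ_c`, whose second derivative `-2ab² / (b p + d)³` is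
negative wherever `b p + d > 0`.
-/

open Topology

theorem hasDerivAt_const_div_affine_pow (a b d : ℝ) (n : ℕ) {x : ℝ} (hx : b * x + d ≠ 0) :
    HasDerivAt (fun y => a / (b * y + d) ^ n) (-(n * a * b) / (b * x + d) ^ (n + 1)) x := by
  have hden : HasDerivAt (fun y => (b * y + d) ^ n) (n * (b * x + d) ^ (n - 1) * b) x := by
    simpa using (((hasDerivAt_id' x).const_mul b).add_const d).fun_pow n
  refine ((hasDerivAt_const x a).div hden (pow_ne_zero n hx)).congr_deriv ?_
  rcases n with _ | n
  · simp
  · rw [add_tsub_cancel_right]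
    field_simp
    ring

section

variable (C a b d e : ℝ)

theorem hasDerivAt_sub_div_affine_sub_mul {x : ℝ} (hx : b * x + d ≠ 0) :
    HasDerivAt (fun y => C - a / (b * y + d) - e * y) (a * b / (b * x + d) ^ 2 - e) x := by
  have h := hasDerivAt_const_div_affine_pow a b d 1 hx
  simp only [pow_one, Nat.cast_one, one_mul] at h
  refine (((hasDerivAt_const x C).sub h).sub ((hasDerivAt_id x).const_mul e)).congr_deriv ?_
  ring

theorem deriv_deriv_sub_div_affine_sub_mul {x : ℝ} (hx : b * x + d ≠ 0) :
    deriv (deriv fun y => C - a / (b * y + d) - e * y) x = -(2 * a * b ^ 2) / (b * x + d) ^ 3 := by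
  have hnhds : {y | b * y + d ≠ 0} ∈ 𝓝 x :=
    (isOpen_ne_fun (by fun_prop) continuous_const).mem_nhds hx
  have hderiv : deriv (fun y => C - a / (b * y + d) - e * y) =ᶠ[𝓝 x]
      fun y => a * b / (b * y + d) ^ 2 - e := by
    filter_upwards [hnhds] with y hy using (hasDerivAt_sub_div_affine_sub_mul C a b d e hy).deriv
  rw [hderiv.deriv_eq, ((hasDerivAt_const_div_affine_pow (a * b) b d 2 hx).sub_const e).deriv]
  push_cast
  ring

theorem strictConcaveOn_sub_div_affine_sub_mul {s : Set ℝ} (hs : Convex ℝ s)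
    (hpos : ∀ x ∈ s, 0 < b * x + d) (ha : 0 < a) (hb : b ≠ 0) :
    StrictConcaveOn ℝ s fun y => C - a / (b * y + d) - e * y := by
  refine strictConcaveOn_of_deriv2_neg hs
    (fun x hx => (hasDerivAt_sub_div_affine_sub_mul C a b d e (hpos x hx).ne').continuousAt
      |>.continuousWithinAt) fun x hx => ?_
  have hx := hpos x (interior_subset hx)
  rw [Function.iterate_succ_apply, Function.iterate_one,
    deriv_deriv_sub_div_affine_sub_mul C a b d e hx.ne']
  exact div_neg_of_neg_of_pos (neg_neg_of_pos (by positivity)) (by positivity)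

end

/-- The approximate average stored energy
`f(p_c) = (τ - Nτ_c)(A p_d [M - βσ²(N-1)/(βN p_c τ_c + σ²(K+1))] + B) - Nτ_c p_c`
is strictly concave in `p_c` on `(0,∞)`, with second derivative
`-2 A p_d (τ-Nτ_c) σ² N² (N-1) τ_c² β³ / (βN p_c τ_c + σ²(K+1))³ < 0`. -/
theorem stored_energy_concave_in_power (A B pd β σ2 τc τ K M : ℝ) (N : ℕ)
    (hA : 0 < A) (hpd : 0 < pd) (hβ : 0 < β) (hσ : 0 < σ2) (hτc : 0 < τc)
    (hτ : N * τc < τ) (hK : 0 ≤ K) (hN : 2 ≤ N) :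
    StrictConcaveOn ℝ (Set.Ioi 0)
      (fun pc : ℝ => (τ - N * τc) * (A * pd * (M
        - β * σ2 * (N - 1) / (β * N * pc * τc + σ2 * (K + 1))) + B) - N * τc * pc)
    ∧ ∀ pc : ℝ, 0 < pc →
      deriv (deriv (fun pc : ℝ => (τ - N * τc) * (A * pd * (M
        - β * σ2 * (N - 1) / (β * N * pc * τc + σ2 * (K + 1))) + B) - N * τc * pc)) pc
        = -(2 * A * pd * (τ - N * τc) * σ2 * N ^ 2 * (N - 1) * τc ^ 2 * β ^ 3)
            / (β * N * pc * τc + σ2 * (K + 1)) ^ 3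
      ∧ -(2 * A * pd * (τ - N * τc) * σ2 * N ^ 2 * (N - 1) * τc ^ 2 * β ^ 3)
            / (β * N * pc * τc + σ2 * (K + 1)) ^ 3 < 0 := by
  have hN1 : (0 : ℝ) < N - 1 := by
    have : (2 : ℝ) ≤ N := by exact_mod_cast hN
    linarith
  have hτ' : 0 < τ - N * τc := sub_pos.mpr hτ
  have hden : ∀ pc : ℝ, 0 < pc → 0 < β * N * τc * pc + σ2 * (K + 1) := fun pc hpc => by
    positivity
  have hf : (fun pc : ℝ => (τ - N * τc) * (A * pd * (M
        - β * σ2 * (N - 1) / (β * N * pc * τc + σ2 * (K + 1))) + B) - N * τc * pc) =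
      fun pc => (τ - N * τc) * (A * pd * M + B)
        - (τ - N * τc) * A * pd * β * σ2 * (N - 1) / (β * N * τc * pc + σ2 * (K + 1))
        - N * τc * pc := by
    funext pc
    ring
  rw [hf]
  refine ⟨strictConcaveOn_sub_div_affine_sub_mul _ _ _ _ _ (convex_Ioi 0) hden (by positivity)
    (by positivity), fun pc hpc => ⟨?_, ?_⟩⟩
  · rw [deriv_deriv_sub_div_affine_sub_mul _ _ _ _ _ (hden pc hpc).ne']
    ring
  · have hden_pc := hden pc hpc
    exact div_neg_of_neg_of_pos (neg_neg_of_pos (by positivity)) (by positivity)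
end

section
/- The function g(τ_c) = (τ - Nτ_c)·(A·p_d·[M - βσ²(N-1)/(βNp_cτ_c + σ²(K+1))] + B) - Nτ_c·p_c is strictly concave in τ_c on (0, τ/N): its second derivative equals -2A·p_d·p_c·σ²β²(βp_cτ + σ²(K+1))·N²(N-1)/(βNp_cτ_c + σ²(K+1))³ < 0. -/
/-!
Writing `d(x) = a x + c`, the energy is `g(x) = (s - n x) (α (m - q / d(x)) + b) - n x r` with
`s = τ`, `n = N`, `α = A p_d`, `q = βσ²(N - 1)`, `a = βN p_c`, `c = σ²(K + 1)`, `r = p_c`.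
Leibniz's rule gives
`g'' = 2 (-n) (α q a / d²) + (s - n x) (-2 α q a² / d³) = -2 α q a (a s + n c) / d³`,
and every factor of the numerator is positive for these parameters.
-/

open Set

noncomputable section

namespace StoredEnergy

variable (s n α m q b a c r : ℝ)

def profile (x : ℝ) : ℝ :=
  (s - n * x) * (α * (m - q / (a * x + c)) + b) - n * x * r

def profileDeriv (x : ℝ) : ℝ :=
  -n * (α * (m - q / (a * x + c)) + b) + (s - n * x) * (α * q * a / (a * x + c) ^ 2) - n * r

def profileDeriv2 (x : ℝ) : ℝ :=
  -(2 * α * q * a * (a * s + n * c)) / (a * x + c) ^ 3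

variable {s n α m q b a c r}

theorem hasDerivAt_const_sub_div_affine {x : ℝ} (hx : a * x + c ≠ 0) :
    HasDerivAt (fun y => m - q / (a * y + c)) (q * a / (a * x + c) ^ 2) x := by
  have hden : HasDerivAt (fun y => a * y + c) a x := by
    simpa using ((hasDerivAt_id x).const_mul a).add_const c
  refine (((hasDerivAt_const x q).div hden hx).const_sub m).congr_deriv ?_
  ring

theorem hasDerivAt_profile {x : ℝ} (hx : a * x + c ≠ 0) :
    HasDerivAt (profile s n α m q b a c r) (profileDeriv s n α m q b a c r x) x := by
  have hlin : HasDerivAt (fun y => s - n * y) (-n) x := by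
    simpa using ((hasDerivAt_id x).const_mul n).const_sub s
  have hfactor := ((hasDerivAt_const_sub_div_affine (m := m) (q := q) hx).const_mul α).add_const b
  refine ((hlin.mul hfactor).sub (((hasDerivAt_id x).const_mul n).mul_const r)).congr_deriv ?_
  unfold profileDeriv
  ring

theorem hasDerivAt_profileDeriv {x : ℝ} (hx : a * x + c ≠ 0) :
    HasDerivAt (profileDeriv s n α m q b a c r) (profileDeriv2 s n α q a c x) x := by
  have hlin : HasDerivAt (fun y => s - n * y) (-n) x := by
    simpa using ((hasDerivAt_id x).const_mul n).const_sub s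
  have hfactor := ((hasDerivAt_const_sub_div_affine (m := m) (q := q) hx).const_mul α).add_const b
  have hden : HasDerivAt (fun y => a * y + c) a x := by
    simpa using ((hasDerivAt_id x).const_mul a).add_const c
  have hsq := (hasDerivAt_const x (α * q * a)).div (hden.pow 2) (pow_ne_zero 2 hx)
  refine (((hfactor.const_mul (-n)).add (hlin.mul hsq)).sub_const (n * r)).congr_deriv ?_
  simp only [profileDeriv2, Pi.div_apply, Pi.pow_apply]
  field_simp
  ring

theorem deriv_deriv_profile {x : ℝ} (hx : a * x + c ≠ 0) :
    deriv (deriv (profile s n α m q b a c r)) x = profileDeriv2 s n α q a c x := by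
  have hderiv : deriv (profile s n α m q b a c r) =ᶠ[nhds x] profileDeriv s n α m q b a c r := by
    have hopen : IsOpen {y : ℝ | a * y + c ≠ 0} :=
      isOpen_ne_fun (by fun_prop) continuous_const
    filter_upwards [hopen.mem_nhds hx] with y hy
    exact (hasDerivAt_profile hy).deriv
  rw [hderiv.deriv_eq]
  exact (hasDerivAt_profileDeriv hx).deriv

theorem profileDeriv2_neg (hcoef : 0 < α * q * a * (a * s + n * c)) {x : ℝ}
    (hx : 0 < a * x + c) : profileDeriv2 s n α q a c x < 0 := by
  unfold profileDeriv2
  have : 0 < 2 * α * q * a * (a * s + n * c) := by linarith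
  exact div_neg_of_neg_of_pos (neg_neg_of_pos this) (by positivity)

theorem strictConcaveOn_profile {D : Set ℝ} (hD : Convex ℝ D)
    (hcoef : 0 < α * q * a * (a * s + n * c)) (hpos : ∀ x ∈ D, 0 < a * x + c) :
    StrictConcaveOn ℝ D (profile s n α m q b a c r) := by
  refine strictConcaveOn_of_deriv2_neg hD ?_ fun x hx => ?_
  · exact fun x hx => (hasDerivAt_profile (hpos x hx).ne').continuousAt.continuousWithinAt
  · have hx' := hpos x (interior_subset hx)
    show deriv (deriv _) x < 0
    rw [deriv_deriv_profile hx'.ne']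
    exact profileDeriv2_neg hcoef hx'

end StoredEnergy

end

open StoredEnergy in
/-- The approximate average stored energy
`g(τ_c) = (τ - Nτ_c)(A p_d [M - βσ²(N-1)/(βN p_c τ_c + σ²(K+1))] + B) - Nτ_c p_c`
is strictly concave in `τ_c` on `(0, τ/N)`, with second derivative
`-2 A p_d p_c σ² β² (β p_c τ + σ²(K+1)) N² (N-1) / (βN p_c τ_c + σ²(K+1))³ < 0`. -/
theorem stored_energy_concave_in_time (A B pd pc β σ2 τ K M : ℝ) (N : ℕ)
    (hA : 0 < A) (hpd : 0 < pd) (hpc : 0 < pc) (hβ : 0 < β) (hσ : 0 < σ2)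
    (hτ : 0 < τ) (hK : 0 ≤ K) (hN : 2 ≤ N) :
    StrictConcaveOn ℝ (Set.Ioo 0 (τ / N))
      (fun τc : ℝ => (τ - N * τc) * (A * pd * (M
        - β * σ2 * (N - 1) / (β * N * pc * τc + σ2 * (K + 1))) + B) - N * τc * pc)
    ∧ ∀ τc : ℝ, τc ∈ Set.Ioo 0 (τ / N) →
      deriv (deriv (fun τc : ℝ => (τ - N * τc) * (A * pd * (M
        - β * σ2 * (N - 1) / (β * N * pc * τc + σ2 * (K + 1))) + B) - N * τc * pc)) τc
        = -(2 * A * pd * pc * σ2 * β ^ 2 * (β * pc * τ + σ2 * (K + 1)) * N ^ 2 * (N - 1))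
            / (β * N * pc * τc + σ2 * (K + 1)) ^ 3
      ∧ -(2 * A * pd * pc * σ2 * β ^ 2 * (β * pc * τ + σ2 * (K + 1)) * N ^ 2 * (N - 1))
            / (β * N * pc * τc + σ2 * (K + 1)) ^ 3 < 0 := by
  have hN1 : (0 : ℝ) < N - 1 := by
    have : (2 : ℝ) ≤ N := by exact_mod_cast hN
    linarith
  have hN0 : (0 : ℝ) < N := by linarith
  have hden : ∀ x ∈ Ioo 0 (τ / N), 0 < β * N * pc * x + σ2 * (K + 1) :=
    fun x hx => by have := hx.1; positivity
  have hcoef : 0 < A * pd * (β * σ2 * (N - 1)) * (β * N * pc)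
      * (β * N * pc * τ + N * (σ2 * (K + 1))) := by positivity
  have hformula : ∀ x : ℝ, profileDeriv2 τ N (A * pd) (β * σ2 * (N - 1)) (β * N * pc)
      (σ2 * (K + 1)) x = -(2 * A * pd * pc * σ2 * β ^ 2 * (β * pc * τ + σ2 * (K + 1))
        * N ^ 2 * (N - 1)) / (β * N * pc * x + σ2 * (K + 1)) ^ 3 :=
    fun x => by unfold profileDeriv2; ring
  refine ⟨strictConcaveOn_profile (convex_Ioo _ _) hcoef hden, fun x hx => ?_⟩
  rw [← hformula]
  exact ⟨deriv_deriv_profile (hden x hx).ne', profileDeriv2_neg hcoef (hden x hx)⟩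
end

section
/- The stationary point of g(τ_c) = (τ - Nτ_c)·(A·p_d·[M - βσ²(N-1)/(βNp_cτ_c + σ²(K+1))] + B) - Nτ_c·p_c in τ_c equals τ_c* = (√((p_cτ + σ²(K+1)/β)·σ²(N-1)/(M + (B + p_c)/(A·p_d))) - σ²(K+1)/β)/(N·p_c). -/
/-!
Write `D(τ_c) = βNp_cτ_c + σ²(K+1)` for the denominator. Clearing `D²` and substituting
`Np_cτ_c = (D - σ²(K+1))/β` turns `g'(τ_c) = 0` into `D² = const`, whose positive root is
`D = β √(…)`; solving `D(τ_c*) = β √(…)` for `τ_c*` gives the stated formula.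
-/

theorem hasDerivAt_linear_mul_sub_div {u n k m c a b B r t : ℝ} (hD : a * t + b ≠ 0) :
    HasDerivAt (fun x => (u - n * x) * (k * (m - c / (a * x + b)) + B) - n * x * r)
      (-n * (k * (m - c / (a * t + b)) + B)
        + (u - n * t) * (k * (c * a / (a * t + b) ^ 2)) - n * r) t := by
  have hden : HasDerivAt (fun x => a * x + b) (a * 1) t :=
    ((hasDerivAt_id t).const_mul a).add_const b
  have hfactor : HasDerivAt (fun x => k * (m - c / (a * x + b)) + B)
      (k * (0 - (0 * (a * t + b) - c * (a * 1)) / (a * t + b) ^ 2)) t :=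
    (((hasDerivAt_const t m).sub ((hasDerivAt_const t c).div hden hD)).const_mul k).add_const B
  have hlin : HasDerivAt (fun x => u - n * x) (0 - n * 1) t :=
    (hasDerivAt_const t u).sub ((hasDerivAt_id t).const_mul n)
  have h : HasDerivAt (fun x => (u - n * x) * (k * (m - c / (a * x + b)) + B) - n * x * r) _ t :=
    (hlin.mul hfactor).sub (((hasDerivAt_id t).const_mul n).mul_const r)
  convert h using 1
  ring

/-- Multiplying `g'(t)` by `D²` leaves `k c (a u + n b) - n (k m + B + r) D²`, since `a t = D - b`. -/
theorem deriv_linear_mul_sub_div_eq_zero {u n k m c a b B r t : ℝ} (hD : a * t + b ≠ 0)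
    (hsq : n * (k * m + B + r) * (a * t + b) ^ 2 = k * c * (a * u + n * b)) :
    deriv (fun x => (u - n * x) * (k * (m - c / (a * x + b)) + B) - n * x * r) t = 0 := by
  rw [(hasDerivAt_linear_mul_sub_div hD).deriv]
  field_simp
  linear_combination (-1 : ℝ) * hsq

theorem mul_mul_mul_div_add_eq {β n r s b : ℝ} (hβ : β ≠ 0) (hn : n ≠ 0) (hr : r ≠ 0) :
    β * n * r * ((s - b / β) / (n * r)) + b = β * s := by
  field_simp
  ring

theorem stationary_condition_of_sq_eq {β σ ν k m B r u n b s : ℝ} (hβ : β ≠ 0) (hk : k ≠ 0)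
    (hQ : m + (B + r) / k ≠ 0) (hs : s ^ 2 = (r * u + b / β) * σ * ν / (m + (B + r) / k)) :
    n * (k * m + B + r) * (β * s) ^ 2 = k * (β * σ * ν) * (β * n * r * u + n * b) := by
  rw [eq_div_iff hQ] at hs
  field_simp at hs
  linear_combination (n * β) * hs

theorem stored_energy_stationary_time_general (A B pd pc β σ2 τ K M : ℝ) (N : ℕ)
    (hA : 0 < A) (hpd : 0 < pd) (hpc : 0 < pc) (hβ : 0 < β) (hσ : 0 < σ2)
    (hK : 0 ≤ K) (hN : 2 ≤ N)
    (hmem : (Real.sqrt ((pc * τ + σ2 * (K + 1) / β) * σ2 * (N - 1)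
          / (M + (B + pc) / (A * pd))) - σ2 * (K + 1) / β) / (N * pc)
        ∈ Set.Ioo 0 (τ / N)) :
    deriv (fun τc : ℝ => (τ - N * τc) * (A * pd * (M
        - β * σ2 * (N - 1) / (β * N * pc * τc + σ2 * (K + 1))) + B) - N * τc * pc)
      ((Real.sqrt ((pc * τ + σ2 * (K + 1) / β) * σ2 * (N - 1)
          / (M + (B + pc) / (A * pd))) - σ2 * (K + 1) / β) / (N * pc))
      = 0 := by
  set X := (pc * τ + σ2 * (K + 1) / β) * σ2 * (N - 1) / (M + (B + pc) / (A * pd))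
  have hN0 : (0 : ℝ) < N := by exact_mod_cast (by omega : 0 < N)
  have hs : 0 < Real.sqrt X := by
    have hdiff := (div_pos_iff_of_pos_right (mul_pos hN0 hpc)).mp hmem.1
    have hb : 0 ≤ σ2 * (K + 1) / β := by positivity
    linarith
  have hX : 0 < X := Real.sqrt_pos.mp hs
  have hQ : M + (B + pc) / (A * pd) ≠ 0 := (div_ne_zero_iff.mp hX.ne').2
  have hD := mul_mul_mul_div_add_eq (s := Real.sqrt X) (b := σ2 * (K + 1)) hβ.ne' hN0.ne' hpc.ne'
  apply deriv_linear_mul_sub_div_eq_zero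
  · rw [hD]; positivity
  · rw [hD]
    exact stationary_condition_of_sq_eq hβ.ne' (by positivity) hQ (Real.sq_sqrt hX.le)

/-- The stationary point of
`g(τ_c) = (τ - Nτ_c)(A p_d [M - βσ²(N-1)/(βN p_c τ_c + σ²(K+1))] + B) - Nτ_c p_c`
is `τ_c* = (√((p_c τ + σ²(K+1)/β) σ²(N-1)/(M + (B+p_c)/(A p_d))) - σ²(K+1)/β)/(N p_c)`. -/
theorem stored_energy_stationary_time (A B pd pc β σ2 τ K M : ℝ) (N : ℕ)
    (hA : 0 < A) (hpd : 0 < pd) (hpc : 0 < pc) (hβ : 0 < β) (hσ : 0 < σ2)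
    (hτ : 0 < τ) (hK : 0 ≤ K) (hN : 2 ≤ N)
    (hM : 0 < M + (B + pc) / (A * pd))
    (hmem : (Real.sqrt ((pc * τ + σ2 * (K + 1) / β) * σ2 * (N - 1)
          / (M + (B + pc) / (A * pd))) - σ2 * (K + 1) / β) / (N * pc)
        ∈ Set.Ioo 0 (τ / N)) :
    deriv (fun τc : ℝ => (τ - N * τc) * (A * pd * (M
        - β * σ2 * (N - 1) / (β * N * pc * τc + σ2 * (K + 1))) + B) - N * τc * pc)
      ((Real.sqrt ((pc * τ + σ2 * (K + 1) / β) * σ2 * (N - 1)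
          / (M + (B + pc) / (A * pd))) - σ2 * (K + 1) / β) / (N * pc))
      = 0 :=
  stored_energy_stationary_time_general A B pd pc β σ2 τ K M N hA hpd hpc hβ hσ hK hN hmem
end

section
/- The objective F(p_c, τ_c) = (τ - Nτ_c)·(A·p_d·[M - βσ²(N-1)/(βNp_cτ_c + σ²(K+1))] + B) - Nτ_cp_c satisfies: whenever the bracketed harvested term dominates, among all (p_c, τ_c) with Np_cτ_c = E fixed, F is maximized at p_c = p_max (the larger p_c, smaller τ_c choice). -/
/-- Among all power–time pairs `(p_c, τ_c)` with fixed channel-estimation energy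
`N p_c τ_c = E`, the objective
`F(p_c, τ_c) = (τ - Nτ_c)(A p_d [M - βσ²(N-1)/(βN p_c τ_c + σ²(K+1))] + B) - Nτ_c p_c`
is maximized at `p_c = p_max` (with `τ_c = E/(N p_max)`), provided the harvested-rate term
`A p_d [M - βσ²(N-1)/(βE + σ²(K+1))] + B` is positive. -/
theorem joint_optimal_power_is_max (A B pd β σ2 τ K M E pmax pc : ℝ) (N : ℕ)
    (hA : 0 < A) (hpd : 0 < pd) (hβ : 0 < β) (hσ : 0 < σ2) (hτ : 0 < τ)
    (hK : 0 ≤ K) (hN : 2 ≤ N) (hE : 0 < E) (hpc : 0 < pc) (hle : pc ≤ pmax)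
    (hpos : 0 < A * pd * (M - β * σ2 * (N - 1) / (β * E + σ2 * (K + 1))) + B) :
    (τ - N * (E / (N * pc))) * (A * pd * (M
        - β * σ2 * (N - 1) / (β * N * pc * (E / (N * pc)) + σ2 * (K + 1))) + B)
      - N * (E / (N * pc)) * pc
    ≤ (τ - N * (E / (N * pmax))) * (A * pd * (M
        - β * σ2 * (N - 1) / (β * N * pmax * (E / (N * pmax)) + σ2 * (K + 1))) + B)
      - N * (E / (N * pmax)) * pmax := by
  have hN0 : (0 : ℝ) < N := by positivity
  have hpm : 0 < pmax := lt_of_lt_of_le hpc hle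
  have h1 : β * ↑N * pc * (E / (↑N * pc)) = β * E := by
    field_simp
  have h2 : β * ↑N * pmax * (E / (↑N * pmax)) = β * E := by
    field_simp
  have h3 : (↑N : ℝ) * (E / (↑N * pc)) = E / pc := by
    field_simp
  have h4 : (↑N : ℝ) * (E / (↑N * pmax)) = E / pmax := by
    field_simp
  rw [h1, h2, h3, h4, div_mul_cancel₀ E hpc.ne', div_mul_cancel₀ E hpm.ne']
  have hdiv : E / pmax ≤ E / pc := div_le_div_of_nonneg_left hE.le hpc hle
  gcongr
end
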